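/- For every prime p ≥ 7, the congruence ∑_{i=1}^{p-1} 1/i ≡ 0 (mod p⁴) holds if and only if ∑_{i=1}^{p-1} 1/i² ≡ 0 (mod p³), inverses being taken in the relevant rings. -/

import Mathlib

open Finset

private lemma zmod_inv_map {m n : ℕ} (f : ZMod m →+* ZMod n) {a : ZMod m} (ha : IsUnit a) :
    f a⁻¹ = (f a)⁻¹ := by
  symm
  apply ZMod.inv_eq_of_mul_eq_one
  rw [← map_mul, ZMod.mul_inv_of_unit a ha, map_one]

private lemma zmod_mul_inv' {n : ℕ} {a b : ZMod n} (ha : IsUnit a) (hb : IsUnit b) :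
    (a * b)⁻¹ = a⁻¹ * b⁻¹ := by
  apply ZMod.inv_eq_of_mul_eq_one
  calc a * b * (a⁻¹ * b⁻¹) = (a * a⁻¹) * (b * b⁻¹) := by ring
  _ = 1 := by rw [ZMod.mul_inv_of_unit a ha, ZMod.mul_inv_of_unit b hb, one_mul]

private lemma sum_reflect {M : Type*} [AddCommMonoid M] (p : ℕ) (F : ℕ → M) :
    ∑ i ∈ Finset.Icc 1 (p - 1), F (p - i) = ∑ i ∈ Finset.Icc 1 (p - 1), F i := by
  apply Finset.sum_bij' (fun i _ => p - i) (fun i _ => p - i) <;>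
    intro a ha <;> simp only [Finset.mem_Icc] at * <;> try omega

private lemma sum_icc_units {p : ℕ} [NeZero p] (hp : p.Prime) (f : ZMod p → ZMod p) :
    ∑ i ∈ Finset.Icc 1 (p - 1), f (i : ZMod p) = ∑ u : (ZMod p)ˣ, f u := by
  haveI := Fact.mk hp
  have hcop : ∀ i ∈ Finset.Icc 1 (p - 1), Nat.Coprime i p := by
    intro i hi
    rw [Finset.mem_Icc] at hi
    have h2 := hp.two_le
    exact Nat.Coprime.symm ((Nat.Prime.coprime_iff_not_dvd hp).mpr
      (Nat.not_dvd_of_pos_of_lt (by omega) (by omega)))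
  refine Finset.sum_bij' (fun i hi => ZMod.unitOfCoprime i (hcop i hi))
    (fun u _ => (u : ZMod p).val) ?_ ?_ ?_ ?_ ?_
  · intro a ha; exact Finset.mem_univ _
  · intro u _
    simp only [Finset.mem_Icc]
    have h1 : (u : ZMod p).val < p := ZMod.val_lt _
    have h2 : (u : ZMod p).val ≠ 0 :=
      fun h => Units.ne_zero u ((ZMod.val_eq_zero _).mp h)
    have h3 := hp.two_le
    omega
  · intro a ha
    rw [Finset.mem_Icc] at ha
    have h2 := hp.two_le
    simp only [ZMod.coe_unitOfCoprime]
    exact ZMod.val_natCast_of_lt (by omega)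
  · intro u _
    apply Units.ext
    simp only [ZMod.coe_unitOfCoprime]
    exact ZMod.natCast_rightInverse _
  · intro a ha
    simp only [ZMod.coe_unitOfCoprime]

private lemma sum_inv_pow_four {p : ℕ} [NeZero p] (hp : p.Prime) (h7 : 7 ≤ p) :
    ∑ i ∈ Finset.Icc 1 (p - 1), (((i : ZMod p)) ^ 4)⁻¹ = 0 := by
  haveI := Fact.mk hp
  rw [sum_icc_units hp (fun a => (a ^ 4)⁻¹)]
  have h1 : ∀ u : (ZMod p)ˣ, (((u : ZMod p)) ^ 4)⁻¹ = (((u⁻¹ : (ZMod p)ˣ) : ZMod p)) ^ 4 := by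
    intro u
    simp only [← Units.val_pow_eq_pow_val]
    rw [ZMod.inv_coe_unit, inv_pow]
  simp_rw [h1]
  have h2 := Equiv.sum_comp (Equiv.inv (ZMod p)ˣ) (fun u : (ZMod p)ˣ => ((u : ZMod p)) ^ 4)
  simp only [Equiv.inv_apply] at h2
  rw [h2]
  have h3 := FiniteField.sum_pow_units (ZMod p) 4
  rw [ZMod.card] at h3
  rw [h3, if_neg]
  intro hdvd
  have := Nat.le_of_dvd (by norm_num) hdvd
  omega

theorem harmonic_iff_inv_square (p : ℕ) (hp : p.Prime) (h7 : 7 ≤ p) :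
    (∑ i ∈ Finset.Icc 1 (p - 1), ((i : ZMod (p ^ 4)))⁻¹ = 0) ↔
      (∑ i ∈ Finset.Icc 1 (p - 1), ((i : ZMod (p ^ 3)) ^ 2)⁻¹ = 0) := by
  classical
  haveI := Fact.mk hp
  have hp0 : p ≠ 0 := hp.ne_zero
  haveI : NeZero p := ⟨hp0⟩
  haveI : NeZero (p ^ 4) := ⟨pow_ne_zero _ hp0⟩
  haveI : NeZero (p ^ 3) := ⟨pow_ne_zero _ hp0⟩
  set R := ZMod (p ^ 4) with hR
  set S := Finset.Icc 1 (p - 1) with hSdef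
  have hple : ∀ i ∈ S, 1 ≤ i ∧ i ≤ p - 1 := fun i hi => by
    rw [hSdef, Finset.mem_Icc] at hi; exact hi
  have hmem : ∀ i ∈ S, p - i ∈ S := fun i hi => by
    have := hple i hi; rw [hSdef, Finset.mem_Icc]; omega
  have hcop : ∀ i ∈ S, ∀ k : ℕ, Nat.Coprime i (p ^ k) := by
    intro i hi k
    have := hple i hi
    exact Nat.Coprime.pow_right _ (Nat.Coprime.symm ((hp.coprime_iff_not_dvd).mpr
      (Nat.not_dvd_of_pos_of_lt (by omega) (by omega))))
  have hu : ∀ i ∈ S, IsUnit ((i : R)) := fun i hi =>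
    (ZMod.isUnit_iff_coprime _ _).mpr (hcop i hi 4)
  have hub : ∀ i ∈ S, IsUnit (((p - i : ℕ) : R)) := fun i hi => hu _ (hmem i hi)
  have hu3 : ∀ i ∈ S, IsUnit ((i : ZMod (p ^ 3))) := fun i hi =>
    (ZMod.isUnit_iff_coprime _ _).mpr (hcop i hi 3)
  have hcast : ∀ i ∈ S, (((p - i : ℕ) : R)) = (p : R) - (i : R) := fun i hi =>
    Nat.cast_sub (by have := hple i hi; omega)
  set S1 := ∑ i ∈ S, ((i : R))⁻¹ with hS1
  set S2 := ∑ i ∈ S, (((i : R)) ^ 2)⁻¹ with hS2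
  set T := ∑ i ∈ S, ((i : R) * ((p - i : ℕ) : R))⁻¹ with hT
  set U := ∑ i ∈ S, (((i : R) * ((p - i : ℕ) : R)) ^ 2)⁻¹ with hU
  have refl1 : ∑ i ∈ S, (((p - i : ℕ) : R))⁻¹ = S1 := sum_reflect p (fun j => ((j : R))⁻¹)
  have refl2 : ∑ i ∈ S, ((((p - i : ℕ) : R)) ^ 2)⁻¹ = S2 :=
    sum_reflect p (fun j => (((j : R)) ^ 2)⁻¹)
  -- eq1 : S1 + S1 = p * T
  have eq1 : S1 + S1 = (p : R) * T := by
    nth_rewrite 1 [← refl1]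
    rw [hS1, ← Finset.sum_add_distrib, hT, Finset.mul_sum]
    apply Finset.sum_congr rfl
    intro i hi
    have ha := hu i hi
    have hb := hub i hi
    rw [zmod_mul_inv' ha hb]
    have h1 := ZMod.mul_inv_of_unit _ ha
    have h2 := ZMod.mul_inv_of_unit _ hb
    have hs : (i : R) + ((p - i : ℕ) : R) = (p : R) := by rw [hcast i hi]; ring
    linear_combination (-(((p - i : ℕ) : R)⁻¹)) * h1 - ((i : R))⁻¹ * h2 +
      ((i : R))⁻¹ * (((p - i : ℕ) : R))⁻¹ * hs
  -- eq2 : S2 + S2 = p^2 * U - 2 * T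
  have eq2 : S2 + S2 = (p : R) ^ 2 * U - 2 * T := by
    nth_rewrite 1 [← refl2]
    rw [hS2, ← Finset.sum_add_distrib, hU, hT, Finset.mul_sum, Finset.mul_sum,
      ← Finset.sum_sub_distrib]
    apply Finset.sum_congr rfl
    intro i hi
    have ha := hu i hi
    have hb := hub i hi
    have hab := ha.mul hb
    have hsq : ∀ {x : R}, IsUnit x → (x ^ 2)⁻¹ = x⁻¹ * x⁻¹ := fun hx => by
      rw [sq, zmod_mul_inv' hx hx]
    rw [hsq ha, hsq hb, hsq hab, zmod_mul_inv' ha hb]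
    have h1 := ZMod.mul_inv_of_unit _ ha
    have h2 := ZMod.mul_inv_of_unit _ hb
    have hs : (i : R) + ((p - i : ℕ) : R) = (p : R) := by rw [hcast i hi]; ring
    set a := (i : R)
    set b := (((p - i : ℕ)) : R)
    set A := a⁻¹
    set B := b⁻¹
    linear_combination (-(B ^ 2 * (a * A + 1)) - 2 * A * B) * h1 +
      (-(A ^ 2 * (b * B + 1)) - 2 * A * B * a * A) * h2 +
      ((a + b + (p : R)) * A ^ 2 * B ^ 2) * hs
  -- eq3 : p^3 * U = 0
  have hdvd : (p : ℕ) ∣ p ^ 4 := dvd_pow_self p (by norm_num)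
  have eq3 : (p : R) ^ 3 * U = 0 := by
    have hgU : (ZMod.castHom hdvd (ZMod p)) U = 0 := by
      rw [hU, map_sum]
      have hterm : ∀ i ∈ S, (ZMod.castHom hdvd (ZMod p)) ((((i : R) * ((p - i : ℕ) : R)) ^ 2)⁻¹)
          = (((i : ZMod p)) ^ 4)⁻¹ := by
        intro i hi
        rw [zmod_inv_map _ (((hu i hi).mul (hub i hi)).pow 2)]
        congr 1
        rw [map_pow, map_mul, map_natCast, map_natCast,
          Nat.cast_sub (by have := hple i hi; omega), ZMod.natCast_self]
        ring
      rw [Finset.sum_congr rfl hterm, hSdef]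
      exact sum_inv_pow_four hp h7
    have hUval : (p : ℕ) ∣ U.val := by
      rw [← ZMod.natCast_eq_zero_iff]
      rw [ZMod.natCast_val, ← ZMod.castHom_apply (h := hdvd)]
      exact hgU
    obtain ⟨c, hc⟩ := hUval
    calc (p : R) ^ 3 * U = (p : R) ^ 3 * ((U.val : ℕ) : R) := by rw [ZMod.natCast_zmod_val]
      _ = ((p ^ 4 : ℕ) : R) * (c : R) := by rw [hc]; push_cast; rw [Nat.cast_mul]; ring
      _ = 0 := by rw [ZMod.natCast_self, zero_mul]
  -- combine
  have comb0 : 2 * (2 * S1 + (p : R) * S2) = 0 := by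
    have comb : 2 * (S1 + S1) + (p : R) * (S2 + S2) = (p : R) ^ 3 * U := by
      rw [eq1, eq2]; ring
    linear_combination comb + eq3
  have two_unit : IsUnit (2 : R) := by
    have h2 : ((2 : ℕ) : R) = (2 : R) := by norm_num
    rw [← h2, ZMod.isUnit_iff_coprime]
    exact Nat.Coprime.pow_right _ ((Nat.coprime_primes Nat.prime_two hp).mpr (by omega))
  have cancel2 : ∀ x : R, 2 * x = 0 → x = 0 := by
    intro x hx
    have h1 := ZMod.inv_mul_of_unit (2 : R) two_unit
    calc x = ((2 : R)⁻¹ * 2) * x := by rw [h1, one_mul]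
      _ = (2 : R)⁻¹ * (2 * x) := by ring
      _ = 0 := by rw [hx, mul_zero]
  have key : 2 * S1 + (p : R) * S2 = 0 := cancel2 _ comb0
  have iff1 : S1 = 0 ↔ (p : R) * S2 = 0 := by
    constructor
    · intro h; linear_combination key - 2 * h
    · intro h; apply cancel2; linear_combination key - h
  have hdvd34 : p ^ 3 ∣ p ^ 4 := pow_dvd_pow p (by norm_num)
  have hfS2 : (ZMod.castHom hdvd34 (ZMod (p ^ 3))) S2
      = ∑ i ∈ S, (((i : ZMod (p ^ 3))) ^ 2)⁻¹ := by
    rw [hS2, map_sum]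
    apply Finset.sum_congr rfl
    intro i hi
    rw [zmod_inv_map _ ((hu i hi).pow 2), map_pow, map_natCast]
  have iff2 : (p : R) * S2 = 0 ↔ (ZMod.castHom hdvd34 (ZMod (p ^ 3))) S2 = 0 := by
    have hfv : (ZMod.castHom hdvd34 (ZMod (p ^ 3))) S2 = ((S2.val : ℕ) : ZMod (p ^ 3)) := by
      rw [ZMod.castHom_apply, ZMod.natCast_val]
    have hS2c : (p : R) * S2 = ((p * S2.val : ℕ) : R) := by
      conv_lhs => rw [← ZMod.natCast_zmod_val S2]
      push_cast; exact (Nat.cast_mul (α := ZMod (p ^ 4)) _ _).symm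
    rw [hfv, hS2c, ZMod.natCast_eq_zero_iff, ZMod.natCast_eq_zero_iff]
    constructor
    · intro h
      have hh : p * p ^ 3 ∣ p * S2.val := by
        rw [show p * p ^ 3 = p ^ 4 by ring]; exact h
      exact (Nat.mul_dvd_mul_iff_left (Nat.pos_of_ne_zero hp0)).mp hh
    · rintro ⟨c, hc⟩
      exact ⟨c, by rw [hc]; ring⟩
  rw [iff1, iff2, hfS2]
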